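/- arXiv:1906.00848 — 6 statements merged into one kernel-verified Lean document; each statement's English description precedes it below -/
import Mathlib

section
/- Let K be a field, L a Lie algebra over K, and μ ≥ 1. Let F : ℤ → (K-subspaces of L) satisfy: (i) F(j) = L for all j ≤ −μ; (ii) F(j+1) ⊆ F(j) for all j ≤ −1; (iii) ⁅F(j), F(k)⁆ ⊆ F(j+k) for all j, k ≤ 0; (iv) F(j−1) = F(j) + ⁅F(−1), F(j)⁆ for all j ≤ −1; (v) for every j ≥ 1, F(j) = {X ∈ F(0) : ⁅X, Z⁆ ∈ F(j−1) for all Z ∈ F(−1)}. Then ⁅F(j), F(k)⁆ ⊆ F(j+k) holds for all j, k ∈ ℤ. -/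
/-!
Call `(j, k)` compatible when `⁅F j, F k⁆ ⊆ F (j + k)`. Pairs with an entry `-1` are compatible
by (iii) and by the definition (v) of the prolongation. For `j, k ≥ -1` compatibility follows by
induction on `j + k`: by (v) it suffices to bracket `⁅x, y⁆` with `w ∈ F (-1)`, and the Jacobi
identity turns this into brackets of pairs `(j, k - 1)` and `(k, j - 1)`. For `k ≤ -1` one descends
in `k`, since by (iv) `F (k - 1)` is spanned by `F k` and `⁅F (-1), F k⁆`, and the Leibniz rule
reduces the second part to the pairs `(j, -1)`, `(j - 1, k)` and `(-1, j + k)`.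
-/

/-- The subspace spanned by all brackets of elements of `A` with elements of `B`. -/
def bracketSpan (K : Type*) {L : Type*} [Field K] [LieRing L] [LieAlgebra K L]
    (A B : Submodule K L) : Submodule K L :=
  Submodule.span K {z | ∃ x ∈ A, ∃ y ∈ B, z = ⁅x, y⁆}

section

variable {K L : Type*} [Field K] [LieRing L] [LieAlgebra K L]

theorem bracketSpan_le_iff {A B C : Submodule K L} :
    bracketSpan K A B ≤ C ↔ ∀ x ∈ A, ∀ y ∈ B, ⁅x, y⁆ ∈ C := by
  rw [bracketSpan, Submodule.span_le]
  constructor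
  · intro h x hx y hy
    exact h ⟨x, hx, y, hy, rfl⟩
  · rintro h _ ⟨x, hx, y, hy, rfl⟩
    exact h x hx y hy

def BracketCompatible (F : ℤ → Submodule K L) (j k : ℤ) : Prop :=
  ∀ x ∈ F j, ∀ y ∈ F k, ⁅x, y⁆ ∈ F (j + k)

namespace BracketCompatible

variable {F : ℤ → Submodule K L} {j k : ℤ}

theorem lie_mem {n : ℤ} (h : BracketCompatible F j k) (hn : j + k = n) {x y : L}
    (hx : x ∈ F j) (hy : y ∈ F k) : ⁅x, y⁆ ∈ F n :=
  hn ▸ h x hx y hy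

theorem symm (h : BracketCompatible F j k) : BracketCompatible F k j := fun x hx y hy => by
  rw [← lie_skew]
  exact neg_mem (h.lie_mem (add_comm j k) hy hx)

end BracketCompatible

variable {F : ℤ → Submodule K L}

theorem le_zero_of_nonneg
    (h_prol : ∀ j : ℤ, 1 ≤ j → ∀ x : L,
      x ∈ F j ↔ (x ∈ F 0 ∧ ∀ z ∈ F (-1), ⁅x, z⁆ ∈ F (j - 1)))
    {j : ℤ} (hj : 0 ≤ j) : F j ≤ F 0 := by
  rcases hj.eq_or_lt with rfl | hj
  · exact le_rfl
  · exact fun x hx => ((h_prol j hj x).mp hx).1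

theorem antitone_of_prolongation
    (h_mono : ∀ j : ℤ, j ≤ -1 → F (j + 1) ≤ F j)
    (h_prol : ∀ j : ℤ, 1 ≤ j → ∀ x : L,
      x ∈ F j ↔ (x ∈ F 0 ∧ ∀ z ∈ F (-1), ⁅x, z⁆ ∈ F (j - 1))) :
    Antitone F := by
  refine antitone_int_of_succ_le fun m => ?_
  rcases le_or_gt m (-1) with hm | hm
  · exact h_mono m hm
  induction m, (show 0 ≤ m by omega) using Int.leInduction with
  | base => exact le_zero_of_nonneg h_prol zero_le_one
  | succ m hm ih =>
    intro x hx
    obtain ⟨hx0, hxF⟩ := (h_prol (m + 1 + 1) (by omega) x).mp hx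
    refine (h_prol (m + 1) (by omega) x).mpr ⟨hx0, fun z hz => ?_⟩
    simpa using ih (by omega) (by simpa using hxF z hz)

theorem bracketCompatible_neg_one
    (h_neg : ∀ j k : ℤ, j ≤ 0 → k ≤ 0 → bracketSpan K (F j) (F k) ≤ F (j + k))
    (h_prol : ∀ j : ℤ, 1 ≤ j → ∀ x : L,
      x ∈ F j ↔ (x ∈ F 0 ∧ ∀ z ∈ F (-1), ⁅x, z⁆ ∈ F (j - 1)))
    (m : ℤ) : BracketCompatible F (-1) m := by
  rcases le_or_gt m 0 with hm | hm
  · exact bracketSpan_le_iff.mp (h_neg (-1) m (by omega) hm)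
  · intro u hu y hy
    rw [← lie_skew, neg_add_eq_sub]
    exact neg_mem (((h_prol m hm y).mp hy).2 u hu)

theorem lie_mem_of_prolongation
    (h_prol : ∀ j : ℤ, 1 ≤ j → ∀ x : L,
      x ∈ F j ↔ (x ∈ F 0 ∧ ∀ z ∈ F (-1), ⁅x, z⁆ ∈ F (j - 1)))
    {n : ℤ} (hn : 1 ≤ n) {x y : L} (h₀ : ⁅x, y⁆ ∈ F 0)
    (h₁ : ∀ w ∈ F (-1), ⁅x, ⁅y, w⁆⁆ ∈ F (n - 1))
    (h₂ : ∀ w ∈ F (-1), ⁅y, ⁅x, w⁆⁆ ∈ F (n - 1)) :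
    ⁅x, y⁆ ∈ F n :=
  (h_prol n hn _).mpr ⟨h₀, fun w hw => by
    rw [lie_lie]
    exact sub_mem (h₁ w hw) (h₂ w hw)⟩

theorem bracketCompatible_of_neg_one_le
    (h_neg : ∀ j k : ℤ, j ≤ 0 → k ≤ 0 → bracketSpan K (F j) (F k) ≤ F (j + k))
    (h_prol : ∀ j : ℤ, 1 ≤ j → ∀ x : L,
      x ∈ F j ↔ (x ∈ F 0 ∧ ∀ z ∈ F (-1), ⁅x, z⁆ ∈ F (j - 1)))
    {j k : ℤ} (hj : -1 ≤ j) (hk : -1 ≤ k) : BracketCompatible F j k := by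
  have h_neg_one := bracketCompatible_neg_one h_neg h_prol
  obtain ⟨N, hN⟩ : ∃ N : ℕ, j + k + 2 ≤ N := ⟨(j + k + 2).toNat, Int.self_le_toNat _⟩
  induction N generalizing j k with
  | zero =>
    obtain rfl : j = -1 := by omega
    exact h_neg_one k
  | succ N ih =>
    rcases hj.eq_or_lt with rfl | hj
    · exact h_neg_one k
    rcases hk.eq_or_lt with rfl | hk
    · exact (h_neg_one j).symm
    intro x hx y hy
    have h₀ : ⁅x, y⁆ ∈ F 0 := bracketSpan_le_iff.mp (h_neg 0 0 le_rfl le_rfl) x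
      (le_zero_of_nonneg h_prol (by omega) hx) y (le_zero_of_nonneg h_prol (by omega) hy)
    rcases (show j + k = 0 ∨ 1 ≤ j + k by omega) with hjk | hjk
    · simpa [hjk] using h₀
    refine lie_mem_of_prolongation h_prol hjk h₀ (fun w hw => ?_) (fun w hw => ?_)
    · exact (ih (j := j) (k := k - 1) (by omega) (by omega) (by omega)).lie_mem (by ring) hx
        ((h_neg_one k).symm.lie_mem (by ring) hy hw)
    · exact (ih (j := k) (k := j - 1) (by omega) (by omega) (by omega)).lie_mem (by ring) hy
        ((h_neg_one j).symm.lie_mem (by ring) hx hw)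

theorem bracketCompatible_sub_one
    (h_mono : ∀ j : ℤ, j ≤ -1 → F (j + 1) ≤ F j)
    (h_neg : ∀ j k : ℤ, j ≤ 0 → k ≤ 0 → bracketSpan K (F j) (F k) ≤ F (j + k))
    (h_gen : ∀ j : ℤ, j ≤ -1 → F (j - 1) = F j ⊔ bracketSpan K (F (-1)) (F j))
    (h_prol : ∀ j : ℤ, 1 ≤ j → ∀ x : L,
      x ∈ F j ↔ (x ∈ F 0 ∧ ∀ z ∈ F (-1), ⁅x, z⁆ ∈ F (j - 1)))
    {k : ℤ} (hk : k ≤ -1) (hF : ∀ j, BracketCompatible F j k) (j : ℤ) :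
    BracketCompatible F j (k - 1) := by
  have h_neg_one := bracketCompatible_neg_one h_neg h_prol
  intro x hx z hz
  rw [h_gen k hk] at hz
  refine (sup_le (fun w hw => ?_) (bracketSpan_le_iff.mpr fun u hu v hv => ?_) :
    F k ⊔ bracketSpan K (F (-1)) (F k) ≤ (F (j + (k - 1))).comap (LieAlgebra.ad K L x)) hz
  · exact antitone_of_prolongation h_mono h_prol (by omega : j + (k - 1) ≤ j + k) (hF j x hx w hw)
  · show ⁅x, ⁅u, v⁆⁆ ∈ F (j + (k - 1))
    rw [leibniz_lie]
    exact add_mem ((hF (j - 1)).lie_mem (by ring) ((h_neg_one j).symm.lie_mem (by ring) hx hu) hv)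
      ((h_neg_one (j + k)).lie_mem (by ring) hu (hF j x hx v hv))

theorem bracketCompatible_of_le_neg_one
    (h_mono : ∀ j : ℤ, j ≤ -1 → F (j + 1) ≤ F j)
    (h_neg : ∀ j k : ℤ, j ≤ 0 → k ≤ 0 → bracketSpan K (F j) (F k) ≤ F (j + k))
    (h_gen : ∀ j : ℤ, j ≤ -1 → F (j - 1) = F j ⊔ bracketSpan K (F (-1)) (F j))
    (h_prol : ∀ j : ℤ, 1 ≤ j → ∀ x : L,
      x ∈ F j ↔ (x ∈ F 0 ∧ ∀ z ∈ F (-1), ⁅x, z⁆ ∈ F (j - 1)))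
    {k : ℤ} (hk : k ≤ -1) (j : ℤ) : BracketCompatible F j k := by
  induction k, hk using Int.leInductionDown generalizing j with
  | base => exact (bracketCompatible_neg_one h_neg h_prol j).symm
  | pred k hk ih => exact bracketCompatible_sub_one h_mono h_neg h_gen h_prol hk ih j

end

theorem filtration_bracket_compat_general
    (K L : Type*) [Field K] [LieRing L] [LieAlgebra K L]
    (F : ℤ → Submodule K L)
    (h_mono : ∀ j : ℤ, j ≤ -1 → F (j + 1) ≤ F j)
    (h_neg : ∀ j k : ℤ, j ≤ 0 → k ≤ 0 → bracketSpan K (F j) (F k) ≤ F (j + k))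
    (h_gen : ∀ j : ℤ, j ≤ -1 → F (j - 1) = F j ⊔ bracketSpan K (F (-1)) (F j))
    (h_prol : ∀ j : ℤ, 1 ≤ j → ∀ x : L,
      x ∈ F j ↔ (x ∈ F 0 ∧ ∀ z ∈ F (-1), ⁅x, z⁆ ∈ F (j - 1))) :
    ∀ j k : ℤ, bracketSpan K (F j) (F k) ≤ F (j + k) := by
  intro j k
  rw [bracketSpan_le_iff]
  rcases le_or_gt k (-1) with hk | hk
  · exact bracketCompatible_of_le_neg_one h_mono h_neg h_gen h_prol hk j
  rcases le_or_gt j (-1) with hj | hj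
  · exact (bracketCompatible_of_le_neg_one h_mono h_neg h_gen h_prol hj k).symm
  · exact bracketCompatible_of_neg_one_le h_neg h_prol (by omega) (by omega)

theorem filtration_bracket_compat
    (K L : Type*) [Field K] [LieRing L] [LieAlgebra K L]
    (μ : ℕ) (hμ : 1 ≤ μ) (F : ℤ → Submodule K L)
    (h_deep : ∀ j : ℤ, j ≤ -(μ : ℤ) → F j = ⊤)
    (h_mono : ∀ j : ℤ, j ≤ -1 → F (j + 1) ≤ F j)
    (h_neg : ∀ j k : ℤ, j ≤ 0 → k ≤ 0 → bracketSpan K (F j) (F k) ≤ F (j + k))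
    (h_gen : ∀ j : ℤ, j ≤ -1 → F (j - 1) = F j ⊔ bracketSpan K (F (-1)) (F j))
    (h_prol : ∀ j : ℤ, 1 ≤ j → ∀ x : L,
      x ∈ F j ↔ (x ∈ F 0 ∧ ∀ z ∈ F (-1), ⁅x, z⁆ ∈ F (j - 1))) :
    ∀ j k : ℤ, bracketSpan K (F j) (F k) ≤ F (j + k) :=
  filtration_bracket_compat_general K L F h_mono h_neg h_gen h_prol
end

section
/- Let K be a field, L a Lie algebra over K, μ ≥ 1, and F : ℤ → (K-subspaces of L) satisfying: F(j) = L for all j ≤ −μ; F(j+1) ⊆ F(j) for all j ≤ −1; ⁅F(j), F(k)⁆ ⊆ F(j+k) for all j, k ≤ 0; F(j−1) = F(j) + ⁅F(−1), F(j)⁆ for all j ≤ −1; and F(j) = {X ∈ F(0) : ⁅X, Z⁆ ∈ F(j−1) for all Z ∈ F(−1)} for every j ≥ 1. If F(ℓ) = F(ℓ+1) for some ℓ ≥ 1, then F(ℓ) is a Lie ideal of L. -/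
theorem stable_prolongation_is_ideal
    (K L : Type*) [Field K] [LieRing L] [LieAlgebra K L]
    (μ : ℕ) (hμ : 1 ≤ μ) (F : ℤ → Submodule K L)
    (h_deep : ∀ j : ℤ, j ≤ -(μ : ℤ) → F j = ⊤)
    (h_mono : ∀ j : ℤ, j ≤ -1 → F (j + 1) ≤ F j)
    (h_neg : ∀ j k : ℤ, j ≤ 0 → k ≤ 0 → bracketSpan K (F j) (F k) ≤ F (j + k))
    (h_gen : ∀ j : ℤ, j ≤ -1 → F (j - 1) = F j ⊔ bracketSpan K (F (-1)) (F j))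
    (h_prol : ∀ j : ℤ, 1 ≤ j → ∀ x : L,
      x ∈ F j ↔ (x ∈ F 0 ∧ ∀ z ∈ F (-1), ⁅x, z⁆ ∈ F (j - 1)))
    (ℓ : ℤ) (hℓ : 1 ≤ ℓ) (h_stab : F ℓ = F (ℓ + 1)) :
    ∃ I : LieIdeal K L, (I : Submodule K L) = F ℓ := by
  -- The submodule of elements whose bracket with `F ℓ` lands in `F ℓ`.
  set S : Submodule K L :=
    { carrier := {x : L | ∀ y ∈ F ℓ, ⁅x, y⁆ ∈ F ℓ}
      add_mem' := fun {a b} ha hb y hy => by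
        simpa [add_lie] using (F ℓ).add_mem (ha y hy) (hb y hy)
      zero_mem' := fun y hy => by simp
      smul_mem' := fun c x hx y hy => by
        simpa [smul_lie] using (F ℓ).smul_mem c (hx y hy) } with hS
  have hmemS : ∀ x : L, x ∈ S ↔ ∀ y ∈ F ℓ, ⁅x, y⁆ ∈ F ℓ := fun x => Iff.rfl
  -- Base case: F (-1) ≤ S
  have hbase : F (-1) ≤ S := by
    intro x hx
    rw [hmemS]
    intro y hy
    have hy' : y ∈ F (ℓ + 1) := h_stab ▸ hy
    have := ((h_prol (ℓ + 1) (by omega) y).mp hy').2 x hx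
    have h2 : ⁅y, x⁆ ∈ F ℓ := by simpa using this
    have : ⁅x, y⁆ = -⁅y, x⁆ := by simp
    rw [this]
    exact (F ℓ).neg_mem h2
  -- Downward induction
  have hstep : ∀ j : ℤ, j ≤ -1 → F j ≤ S → F (j - 1) ≤ S := by
    intro j hj hFj
    rw [h_gen j hj]
    refine sup_le hFj ?_
    rw [bracketSpan, Submodule.span_le]
    rintro _ ⟨z, hz, w, hw, rfl⟩
    rw [SetLike.mem_coe, hmemS]
    intro y hy
    have h1 : ⁅w, y⁆ ∈ F ℓ := (hFj hw) y hy
    have h2 : ⁅z, ⁅w, y⁆⁆ ∈ F ℓ := (hbase hz) _ h1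
    have h3 : ⁅z, y⁆ ∈ F ℓ := (hbase hz) y hy
    have h4 : ⁅w, ⁅z, y⁆⁆ ∈ F ℓ := (hFj hw) _ h3
    have : ⁅⁅z, w⁆, y⁆ = ⁅z, ⁅w, y⁆⁆ - ⁅w, ⁅z, y⁆⁆ := by
      rw [lie_lie]
    rw [this]
    exact (F ℓ).sub_mem h2 h4
  have hall : ∀ n : ℕ, F (-1 - n) ≤ S := by
    intro n
    induction n with
    | zero => simpa using hbase
    | succ k ih =>
      have := hstep (-1 - k) (by omega) ih
      have heq : (-1 - (k : ℤ)) - 1 = -1 - (k + 1 : ℕ) := by push_cast; ring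
      rwa [heq] at this
  have htop : (⊤ : Submodule K L) ≤ S := by
    have h1 : F (-(μ : ℤ)) = ⊤ := h_deep _ le_rfl
    have h2 : F (-1 - ((μ - 1 : ℕ) : ℤ)) ≤ S := hall (μ - 1)
    have heq : (-1 - ((μ - 1 : ℕ) : ℤ)) = -(μ : ℤ) := by
      have : (1 : ℕ) ≤ μ := hμ
      push_cast [Nat.cast_sub this]
      ring
    rw [heq, h1] at h2
    exact h2
  refine ⟨{ carrier := (F ℓ : Set L)
            add_mem' := fun {a b} ha hb => (F ℓ).add_mem ha hb
            zero_mem' := (F ℓ).zero_mem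
            smul_mem' := fun c x hx => (F ℓ).smul_mem c hx
            lie_mem := fun {x y} hy => (htop (Submodule.mem_top) : x ∈ S) y hy }, rfl⟩
end

section
/- Let k, m ≥ 1, let J₁ be a k×k signature matrix and J₂ an m×m signature matrix, and let Ξ be an m×k complex matrix such that J₁ + Ξ*J₂Ξ and J₂ + ΞJ₁Ξ* are invertible; set D₁ = (J₁ + Ξ*J₂Ξ)⁻¹ and D₂ = (J₂ + ΞJ₁Ξ*)⁻¹. Let X¹, Y¹ ∈ ℝ^m be column vectors, X², Y² ∈ ℝ^k be row vectors, and c ∈ ℝ. Define the column vector Z¹ = (X¹ + iY¹) − ΞJ₁(X² − iY²)ᵀ, the row vector Z² = (X² + iY²) + (X¹ − iY¹)ᵀJ₂Ξ, and the scalar w = ic − (1/2)(X² + iY²)J₁(X² − iY²)ᵀ + (1/2)(X¹ − iY¹)ᵀJ₂(X¹ + iY¹) − (X¹ − iY¹)ᵀJ₂ΞJ₁(X² − iY²)ᵀ. Then Re(w) = (1/2)(Z̄¹)ᵀD₂Z¹ − (1/2)Z²D₁(Z̄²)ᵀ + Re((1/2)Z²D₁Ξ*J₂Z¹ + (1/2)Z²J₁Ξ*D₂Z¹).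 -/
/-- A signature matrix: a diagonal complex matrix whose diagonal entries all equal `1` or `-1`. -/
def IsSignatureMatrix {n : Type*} [DecidableEq n] (J : Matrix n n ℂ) : Prop :=
  ∃ d : n → ℂ, (∀ i, d i = 1 ∨ d i = -1) ∧ J = Matrix.diagonal d

lemma IsSignatureMatrix.mul_self {n : Type*} [DecidableEq n] [Fintype n] {J : Matrix n n ℂ}
    (h : IsSignatureMatrix J) : J * J = 1 := by
  obtain ⟨d, hd, rfl⟩ := h
  rw [Matrix.diagonal_mul_diagonal]
  have hdd : (fun i => d i * d i) = (1 : n → ℂ) := by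
    funext i
    rcases hd i with h | h <;> simp [h]
  rw [hdd]; exact Matrix.diagonal_one

open Matrix in
lemma IsSignatureMatrix.herm {n : Type*} [DecidableEq n] {J : Matrix n n ℂ}
    (h : IsSignatureMatrix J) : Jᴴ = J := by
  obtain ⟨d, hd, rfl⟩ := h
  rw [Matrix.diagonal_conjTranspose]
  have hdd : (star d) = d := by
    funext i
    rcases hd i with h | h <;> simp [Pi.star_apply, h]
  rw [hdd]

set_option maxHeartbeats 1600000

open Matrix in
theorem su_model_defining_equation
    (k m : ℕ) (hk : 1 ≤ k) (hm : 1 ≤ m)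
    (J₁ : Matrix (Fin k) (Fin k) ℂ) (J₂ : Matrix (Fin m) (Fin m) ℂ)
    (hJ₁ : IsSignatureMatrix J₁) (hJ₂ : IsSignatureMatrix J₂)
    (Ξ : Matrix (Fin m) (Fin k) ℂ)
    (h₁ : IsUnit (J₁ + Ξᴴ * J₂ * Ξ)) (h₂ : IsUnit (J₂ + Ξ * J₁ * Ξᴴ))
    (D₁ : Matrix (Fin k) (Fin k) ℂ) (hD₁ : D₁ = (J₁ + Ξᴴ * J₂ * Ξ)⁻¹)
    (D₂ : Matrix (Fin m) (Fin m) ℂ) (hD₂ : D₂ = (J₂ + Ξ * J₁ * Ξᴴ)⁻¹)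
    (X₁ Y₁ : Matrix (Fin m) (Fin 1) ℝ) (X₂ Y₂ : Matrix (Fin 1) (Fin k) ℝ) (c : ℝ)
    -- the holomorphic and antiholomorphic combinations X ± iY of the real parameters
    (U₁ V₁ : Matrix (Fin m) (Fin 1) ℂ)
    (hU₁ : U₁ = X₁.map Complex.ofReal + Complex.I • Y₁.map Complex.ofReal)
    (hV₁ : V₁ = X₁.map Complex.ofReal - Complex.I • Y₁.map Complex.ofReal)
    (U₂ V₂ : Matrix (Fin 1) (Fin k) ℂ)
    (hU₂ : U₂ = X₂.map Complex.ofReal + Complex.I • Y₂.map Complex.ofReal)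
    (hV₂ : V₂ = X₂.map Complex.ofReal - Complex.I • Y₂.map Complex.ofReal)
    -- the embedding coordinates
    (Z₁ : Matrix (Fin m) (Fin 1) ℂ) (hZ₁ : Z₁ = U₁ - Ξ * J₁ * V₂ᵀ)
    (Z₂ : Matrix (Fin 1) (Fin k) ℂ) (hZ₂ : Z₂ = U₂ + V₁ᵀ * J₂ * Ξ)
    (w : ℂ)
    (hw : w = Complex.I * (c : ℂ) - (1/2) * (U₂ * J₁ * V₂ᵀ) 0 0
        + (1/2) * (V₁ᵀ * J₂ * U₁) 0 0 - (V₁ᵀ * J₂ * Ξ * J₁ * V₂ᵀ) 0 0) :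
    (w.re : ℂ) = (1/2) * (Z₁ᴴ * D₂ * Z₁) 0 0 - (1/2) * (Z₂ * D₁ * Z₂ᴴ) 0 0
      + (Complex.ofReal ((1/2) * (Z₂ * D₁ * Ξᴴ * J₂ * Z₁) 0 0
          + (1/2) * (Z₂ * J₁ * Ξᴴ * D₂ * Z₁) 0 0).re) := by
  have hJ1s : J₁ * J₁ = 1 := hJ₁.mul_self
  have hJ2s : J₂ * J₂ = 1 := hJ₂.mul_self
  have hJ1h : J₁ᴴ = J₁ := hJ₁.herm
  have hJ2h : J₂ᴴ = J₂ := hJ₂.herm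
  have hAdet : IsUnit (J₁ + Ξᴴ * J₂ * Ξ).det := (Matrix.isUnit_iff_isUnit_det _).mp h₁
  have hBdet : IsUnit (J₂ + Ξ * J₁ * Ξᴴ).det := (Matrix.isUnit_iff_isUnit_det _).mp h₂
  have hAD : (J₁ + Ξᴴ * J₂ * Ξ) * D₁ = 1 := by rw [hD₁]; exact Matrix.mul_nonsing_inv _ hAdet
  have hDA : D₁ * (J₁ + Ξᴴ * J₂ * Ξ) = 1 := by rw [hD₁]; exact Matrix.nonsing_inv_mul _ hAdet
  have hBD : (J₂ + Ξ * J₁ * Ξᴴ) * D₂ = 1 := by rw [hD₂]; exact Matrix.mul_nonsing_inv _ hBdet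
  have hDB : D₂ * (J₂ + Ξ * J₁ * Ξᴴ) = 1 := by rw [hD₂]; exact Matrix.nonsing_inv_mul _ hBdet
  have hAh : (J₁ + Ξᴴ * J₂ * Ξ)ᴴ = J₁ + Ξᴴ * J₂ * Ξ := by
    simp only [Matrix.conjTranspose_add, Matrix.conjTranspose_mul,
      Matrix.conjTranspose_conjTranspose, hJ1h, hJ2h, Matrix.mul_assoc]
  have hBh : (J₂ + Ξ * J₁ * Ξᴴ)ᴴ = J₂ + Ξ * J₁ * Ξᴴ := by
    simp only [Matrix.conjTranspose_add, Matrix.conjTranspose_mul,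
      Matrix.conjTranspose_conjTranspose, hJ1h, hJ2h, Matrix.mul_assoc]
  have hD1h : D₁ᴴ = D₁ := by rw [hD₁, Matrix.conjTranspose_nonsing_inv, hAh]
  have hD2h : D₂ᴴ = D₂ := by rw [hD₂, Matrix.conjTranspose_nonsing_inv, hBh]
  -- intertwining identities
  have hE : Ξ * J₁ * (J₁ + Ξᴴ * J₂ * Ξ) = (J₂ + Ξ * J₁ * Ξᴴ) * (J₂ * Ξ) := by
    have e1 : Ξ * J₁ * (J₁ + Ξᴴ * J₂ * Ξ)
        = Ξ * (J₁ * J₁) + Ξ * J₁ * (Ξᴴ * (J₂ * Ξ)) := by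
      rw [Matrix.mul_add]; simp only [Matrix.mul_assoc]
    have e2 : (J₂ + Ξ * J₁ * Ξᴴ) * (J₂ * Ξ)
        = J₂ * J₂ * Ξ + Ξ * J₁ * (Ξᴴ * (J₂ * Ξ)) := by
      rw [Matrix.add_mul]; simp only [Matrix.mul_assoc]
    rw [e1, e2, hJ1s, hJ2s, Matrix.mul_one, Matrix.one_mul]
  have hInt1 : J₂ * Ξ * D₁ = D₂ * Ξ * J₁ := by
    have h0 : D₂ * (Ξ * J₁ * (J₁ + Ξᴴ * J₂ * Ξ)) * D₁
        = D₂ * ((J₂ + Ξ * J₁ * Ξᴴ) * (J₂ * Ξ)) * D₁ := by rw [hE]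
    have l1 : D₂ * (Ξ * J₁ * (J₁ + Ξᴴ * J₂ * Ξ)) * D₁ = D₂ * Ξ * J₁ := by
      calc D₂ * (Ξ * J₁ * (J₁ + Ξᴴ * J₂ * Ξ)) * D₁
          = D₂ * Ξ * J₁ * ((J₁ + Ξᴴ * J₂ * Ξ) * D₁) := by simp only [Matrix.mul_assoc]
        _ = D₂ * Ξ * J₁ := by rw [hAD, Matrix.mul_one]
    have l2 : D₂ * ((J₂ + Ξ * J₁ * Ξᴴ) * (J₂ * Ξ)) * D₁ = J₂ * Ξ * D₁ := by
      calc D₂ * ((J₂ + Ξ * J₁ * Ξᴴ) * (J₂ * Ξ)) * D₁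
          = D₂ * (J₂ + Ξ * J₁ * Ξᴴ) * (J₂ * (Ξ * D₁)) := by simp only [Matrix.mul_assoc]
        _ = J₂ * (Ξ * D₁) := by rw [hDB, Matrix.one_mul]
        _ = J₂ * Ξ * D₁ := by rw [Matrix.mul_assoc]
    rw [l1, l2] at h0
    exact h0.symm
  have hInt2 : D₁ * Ξᴴ * J₂ = J₁ * Ξᴴ * D₂ := by
    have h0 : (J₂ * Ξ * D₁)ᴴ = (D₂ * Ξ * J₁)ᴴ := by rw [hInt1]
    simp only [Matrix.conjTranspose_mul, hJ1h, hJ2h, hD1h, hD2h, Matrix.mul_assoc] at h0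
    simp only [Matrix.mul_assoc]
    exact h0
  -- the six key coefficient identities
  have hM1 : D₂ * Ξ * J₁ * Ξᴴ * J₂ = J₂ - D₂ := by
    have h1 : D₂ * (Ξ * J₁ * Ξᴴ) = 1 - D₂ * J₂ := by
      rw [← hDB, Matrix.mul_add]; abel
    calc D₂ * Ξ * J₁ * Ξᴴ * J₂ = D₂ * (Ξ * J₁ * Ξᴴ) * J₂ := by simp only [Matrix.mul_assoc]
      _ = (1 - D₂ * J₂) * J₂ := by rw [h1]
      _ = J₂ - D₂ := by rw [Matrix.sub_mul, Matrix.one_mul, Matrix.mul_assoc, hJ2s, Matrix.mul_one]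
  have hM2 : J₂ * Ξ * J₁ * Ξᴴ * D₂ = J₂ - D₂ := by
    have h1 : (Ξ * J₁ * Ξᴴ) * D₂ = 1 - J₂ * D₂ := by
      rw [← hBD, Matrix.add_mul]; abel
    calc J₂ * Ξ * J₁ * Ξᴴ * D₂ = J₂ * ((Ξ * J₁ * Ξᴴ) * D₂) := by simp only [Matrix.mul_assoc]
      _ = J₂ * (1 - J₂ * D₂) := by rw [h1]
      _ = J₂ - D₂ := by rw [Matrix.mul_sub, Matrix.mul_one, ← Matrix.mul_assoc, hJ2s, Matrix.one_mul]
  have hM3 : D₁ * Ξᴴ * J₂ * Ξ * J₁ = J₁ - D₁ := by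
    have h1 : D₁ * (Ξᴴ * J₂ * Ξ) = 1 - D₁ * J₁ := by
      rw [← hDA, Matrix.mul_add]; abel
    calc D₁ * Ξᴴ * J₂ * Ξ * J₁ = D₁ * (Ξᴴ * J₂ * Ξ) * J₁ := by simp only [Matrix.mul_assoc]
      _ = (1 - D₁ * J₁) * J₁ := by rw [h1]
      _ = J₁ - D₁ := by rw [Matrix.sub_mul, Matrix.one_mul, Matrix.mul_assoc, hJ1s, Matrix.mul_one]
  have hM4 : J₁ * Ξᴴ * J₂ * Ξ * D₁ = J₁ - D₁ := by
    have h1 : (Ξᴴ * J₂ * Ξ) * D₁ = 1 - J₁ * D₁ := by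
      rw [← hAD, Matrix.add_mul]; abel
    calc J₁ * Ξᴴ * J₂ * Ξ * D₁ = J₁ * ((Ξᴴ * J₂ * Ξ) * D₁) := by simp only [Matrix.mul_assoc]
      _ = J₁ * (1 - J₁ * D₁) := by rw [h1]
      _ = J₁ - D₁ := by rw [Matrix.mul_sub, Matrix.mul_one, ← Matrix.mul_assoc, hJ1s, Matrix.one_mul]
  have hM5 : J₂ * Ξ * D₁ * Ξᴴ * J₂ = J₂ - D₂ := by
    calc J₂ * Ξ * D₁ * Ξᴴ * J₂ = J₂ * Ξ * D₁ * (Ξᴴ * J₂) := by simp only [Matrix.mul_assoc]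
      _ = D₂ * Ξ * J₁ * (Ξᴴ * J₂) := by rw [hInt1]
      _ = D₂ * Ξ * J₁ * Ξᴴ * J₂ := by simp only [Matrix.mul_assoc]
      _ = J₂ - D₂ := hM1
  have hM6 : J₁ * Ξᴴ * D₂ * Ξ * J₁ = J₁ - D₁ := by
    calc J₁ * Ξᴴ * D₂ * Ξ * J₁ = J₁ * Ξᴴ * D₂ * (Ξ * J₁) := by simp only [Matrix.mul_assoc]
      _ = D₁ * Ξᴴ * J₂ * (Ξ * J₁) := by rw [← hInt2]
      _ = D₁ * Ξᴴ * J₂ * Ξ * J₁ := by simp only [Matrix.mul_assoc]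
      _ = J₁ - D₁ := hM3
  -- conjugation of the vectors
  have cU₁ : U₁ᴴ = V₁ᵀ := by
    rw [hU₁, hV₁]; ext i j
    simp [Matrix.conjTranspose_apply, Matrix.transpose_apply, Matrix.add_apply,
      Matrix.sub_apply, Matrix.smul_apply, Matrix.map_apply, smul_eq_mul, star_add,
      star_mul', Complex.conj_ofReal]
    try ring
  have cV₁ : (V₁ᵀ)ᴴ = U₁ := by
    rw [hU₁, hV₁]; ext i j
    simp [Matrix.conjTranspose_apply, Matrix.transpose_apply, Matrix.add_apply,
      Matrix.sub_apply, Matrix.smul_apply, Matrix.map_apply, smul_eq_mul, star_sub,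
      star_mul', Complex.conj_ofReal]
    try ring
  have cU₂ : U₂ᴴ = V₂ᵀ := by
    rw [hU₂, hV₂]; ext i j
    simp [Matrix.conjTranspose_apply, Matrix.transpose_apply, Matrix.add_apply,
      Matrix.sub_apply, Matrix.smul_apply, Matrix.map_apply, smul_eq_mul, star_add,
      star_mul', Complex.conj_ofReal]
    try ring
  have cV₂ : (V₂ᵀ)ᴴ = U₂ := by
    rw [hU₂, hV₂]; ext i j
    simp [Matrix.conjTranspose_apply, Matrix.transpose_apply, Matrix.add_apply,
      Matrix.sub_apply, Matrix.smul_apply, Matrix.map_apply, smul_eq_mul, star_sub,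
      star_mul', Complex.conj_ofReal]
    try ring
  have hZ₁c : Z₁ᴴ = V₁ᵀ - U₂ * J₁ * Ξᴴ := by
    rw [hZ₁]
    simp only [Matrix.conjTranspose_sub, Matrix.conjTranspose_mul, cU₁, cV₂, hJ1h,
      Matrix.mul_assoc]
  have hZ₂c : Z₂ᴴ = V₂ᵀ + Ξᴴ * J₂ * U₁ := by
    rw [hZ₂]
    simp only [Matrix.conjTranspose_add, Matrix.conjTranspose_mul, cU₂, cV₁, hJ2h,
      Matrix.mul_assoc]
  -- expansions
  have F1 : Z₁ᴴ * D₂ * Z₁ = V₁ᵀ * D₂ * U₁ - V₁ᵀ * D₂ * Ξ * J₁ * V₂ᵀ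
      - U₂ * J₁ * Ξᴴ * D₂ * U₁ + U₂ * J₁ * Ξᴴ * D₂ * Ξ * J₁ * V₂ᵀ := by
    rw [hZ₁c, hZ₁]
    simp only [Matrix.sub_mul, Matrix.mul_sub, Matrix.add_mul, Matrix.mul_add,
      Matrix.mul_assoc]
    abel
  have F2 : Z₂ * D₁ * Z₂ᴴ = U₂ * D₁ * V₂ᵀ + U₂ * D₁ * Ξᴴ * J₂ * U₁
      + V₁ᵀ * J₂ * Ξ * D₁ * V₂ᵀ + V₁ᵀ * J₂ * Ξ * D₁ * Ξᴴ * J₂ * U₁ := by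
    rw [hZ₂c, hZ₂]
    simp only [Matrix.sub_mul, Matrix.mul_sub, Matrix.add_mul, Matrix.mul_add,
      Matrix.mul_assoc]
    abel
  have F3 : Z₂ * D₁ * Ξᴴ * J₂ * Z₁ = U₂ * D₁ * Ξᴴ * J₂ * U₁
      - U₂ * D₁ * Ξᴴ * J₂ * Ξ * J₁ * V₂ᵀ + V₁ᵀ * J₂ * Ξ * D₁ * Ξᴴ * J₂ * U₁
      - V₁ᵀ * J₂ * Ξ * D₁ * Ξᴴ * J₂ * Ξ * J₁ * V₂ᵀ := by
    rw [hZ₂, hZ₁]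
    simp only [Matrix.sub_mul, Matrix.mul_sub, Matrix.add_mul, Matrix.mul_add,
      Matrix.mul_assoc]
    abel
  have F4 : Z₂ * J₁ * Ξᴴ * D₂ * Z₁ = U₂ * J₁ * Ξᴴ * D₂ * U₁
      - U₂ * J₁ * Ξᴴ * D₂ * Ξ * J₁ * V₂ᵀ + V₁ᵀ * J₂ * Ξ * J₁ * Ξᴴ * D₂ * U₁
      - V₁ᵀ * J₂ * Ξ * J₁ * Ξᴴ * D₂ * Ξ * J₁ * V₂ᵀ := by
    rw [hZ₂, hZ₁]
    simp only [Matrix.sub_mul, Matrix.mul_sub, Matrix.add_mul, Matrix.mul_add,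
      Matrix.mul_assoc]
    abel
  have F5 : Z₁ᴴ * J₂ * Ξ * D₁ * Z₂ᴴ = V₁ᵀ * J₂ * Ξ * D₁ * V₂ᵀ
      + V₁ᵀ * J₂ * Ξ * D₁ * Ξᴴ * J₂ * U₁ - U₂ * J₁ * Ξᴴ * J₂ * Ξ * D₁ * V₂ᵀ
      - U₂ * J₁ * Ξᴴ * J₂ * Ξ * D₁ * Ξᴴ * J₂ * U₁ := by
    rw [hZ₁c, hZ₂c]
    simp only [Matrix.sub_mul, Matrix.mul_sub, Matrix.add_mul, Matrix.mul_add,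
      Matrix.mul_assoc]
    abel
  have F6 : Z₁ᴴ * D₂ * Ξ * J₁ * Z₂ᴴ = V₁ᵀ * D₂ * Ξ * J₁ * V₂ᵀ
      + V₁ᵀ * D₂ * Ξ * J₁ * Ξᴴ * J₂ * U₁ - U₂ * J₁ * Ξᴴ * D₂ * Ξ * J₁ * V₂ᵀ
      - U₂ * J₁ * Ξᴴ * D₂ * Ξ * J₁ * Ξᴴ * J₂ * U₁ := by
    rw [hZ₁c, hZ₂c]
    simp only [Matrix.sub_mul, Matrix.mul_sub, Matrix.add_mul, Matrix.mul_add,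
      Matrix.mul_assoc]
    abel
  -- applied coefficient identities
  have EA1 : V₁ᵀ * D₂ * Ξ * J₁ * Ξᴴ * J₂ * U₁ = V₁ᵀ * J₂ * U₁ - V₁ᵀ * D₂ * U₁ := by
    calc V₁ᵀ * D₂ * Ξ * J₁ * Ξᴴ * J₂ * U₁
        = V₁ᵀ * (D₂ * Ξ * J₁ * Ξᴴ * J₂) * U₁ := by simp only [Matrix.mul_assoc]
      _ = V₁ᵀ * (J₂ - D₂) * U₁ := by rw [hM1]
      _ = V₁ᵀ * J₂ * U₁ - V₁ᵀ * D₂ * U₁ := by rw [Matrix.mul_sub, Matrix.sub_mul]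
  have EA2 : V₁ᵀ * J₂ * Ξ * J₁ * Ξᴴ * D₂ * U₁ = V₁ᵀ * J₂ * U₁ - V₁ᵀ * D₂ * U₁ := by
    calc V₁ᵀ * J₂ * Ξ * J₁ * Ξᴴ * D₂ * U₁
        = V₁ᵀ * (J₂ * Ξ * J₁ * Ξᴴ * D₂) * U₁ := by simp only [Matrix.mul_assoc]
      _ = V₁ᵀ * (J₂ - D₂) * U₁ := by rw [hM2]
      _ = V₁ᵀ * J₂ * U₁ - V₁ᵀ * D₂ * U₁ := by rw [Matrix.mul_sub, Matrix.sub_mul]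
  have EB1 : U₂ * D₁ * Ξᴴ * J₂ * Ξ * J₁ * V₂ᵀ = U₂ * J₁ * V₂ᵀ - U₂ * D₁ * V₂ᵀ := by
    calc U₂ * D₁ * Ξᴴ * J₂ * Ξ * J₁ * V₂ᵀ
        = U₂ * (D₁ * Ξᴴ * J₂ * Ξ * J₁) * V₂ᵀ := by simp only [Matrix.mul_assoc]
      _ = U₂ * (J₁ - D₁) * V₂ᵀ := by rw [hM3]
      _ = U₂ * J₁ * V₂ᵀ - U₂ * D₁ * V₂ᵀ := by rw [Matrix.mul_sub, Matrix.sub_mul]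
  have EB2 : U₂ * J₁ * Ξᴴ * J₂ * Ξ * D₁ * V₂ᵀ = U₂ * J₁ * V₂ᵀ - U₂ * D₁ * V₂ᵀ := by
    calc U₂ * J₁ * Ξᴴ * J₂ * Ξ * D₁ * V₂ᵀ
        = U₂ * (J₁ * Ξᴴ * J₂ * Ξ * D₁) * V₂ᵀ := by simp only [Matrix.mul_assoc]
      _ = U₂ * (J₁ - D₁) * V₂ᵀ := by rw [hM4]
      _ = U₂ * J₁ * V₂ᵀ - U₂ * D₁ * V₂ᵀ := by rw [Matrix.mul_sub, Matrix.sub_mul]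
  have EC1 : U₂ * J₁ * Ξᴴ * J₂ * Ξ * D₁ * Ξᴴ * J₂ * U₁
      = U₂ * J₁ * Ξᴴ * J₂ * U₁ - U₂ * D₁ * Ξᴴ * J₂ * U₁ := by
    calc U₂ * J₁ * Ξᴴ * J₂ * Ξ * D₁ * Ξᴴ * J₂ * U₁
        = U₂ * (J₁ * Ξᴴ * J₂ * Ξ * D₁) * (Ξᴴ * J₂ * U₁) := by simp only [Matrix.mul_assoc]
      _ = U₂ * (J₁ - D₁) * (Ξᴴ * J₂ * U₁) := by rw [hM4]
      _ = U₂ * J₁ * Ξᴴ * J₂ * U₁ - U₂ * D₁ * Ξᴴ * J₂ * U₁ := by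
          rw [Matrix.mul_sub, Matrix.sub_mul]; simp only [Matrix.mul_assoc]
  have EC2 : U₂ * J₁ * Ξᴴ * D₂ * Ξ * J₁ * Ξᴴ * J₂ * U₁
      = U₂ * J₁ * Ξᴴ * J₂ * U₁ - U₂ * J₁ * Ξᴴ * D₂ * U₁ := by
    calc U₂ * J₁ * Ξᴴ * D₂ * Ξ * J₁ * Ξᴴ * J₂ * U₁
        = U₂ * J₁ * Ξᴴ * (D₂ * Ξ * J₁ * Ξᴴ * J₂) * U₁ := by simp only [Matrix.mul_assoc]
      _ = U₂ * J₁ * Ξᴴ * (J₂ - D₂) * U₁ := by rw [hM1]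
      _ = U₂ * J₁ * Ξᴴ * J₂ * U₁ - U₂ * J₁ * Ξᴴ * D₂ * U₁ := by
          rw [Matrix.mul_sub, Matrix.sub_mul]
  have ED1 : V₁ᵀ * J₂ * Ξ * J₁ * Ξᴴ * D₂ * Ξ * J₁ * V₂ᵀ
      = V₁ᵀ * J₂ * Ξ * J₁ * V₂ᵀ - V₁ᵀ * D₂ * Ξ * J₁ * V₂ᵀ := by
    calc V₁ᵀ * J₂ * Ξ * J₁ * Ξᴴ * D₂ * Ξ * J₁ * V₂ᵀ
        = V₁ᵀ * (J₂ * Ξ * J₁ * Ξᴴ * D₂) * (Ξ * J₁ * V₂ᵀ) := by simp only [Matrix.mul_assoc]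
      _ = V₁ᵀ * (J₂ - D₂) * (Ξ * J₁ * V₂ᵀ) := by rw [hM2]
      _ = V₁ᵀ * J₂ * Ξ * J₁ * V₂ᵀ - V₁ᵀ * D₂ * Ξ * J₁ * V₂ᵀ := by
          rw [Matrix.mul_sub, Matrix.sub_mul]; simp only [Matrix.mul_assoc]
  have ED2 : V₁ᵀ * J₂ * Ξ * D₁ * Ξᴴ * J₂ * Ξ * J₁ * V₂ᵀ
      = V₁ᵀ * J₂ * Ξ * J₁ * V₂ᵀ - V₁ᵀ * J₂ * Ξ * D₁ * V₂ᵀ := by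
    calc V₁ᵀ * J₂ * Ξ * D₁ * Ξᴴ * J₂ * Ξ * J₁ * V₂ᵀ
        = V₁ᵀ * J₂ * Ξ * (D₁ * Ξᴴ * J₂ * Ξ * J₁) * V₂ᵀ := by simp only [Matrix.mul_assoc]
      _ = V₁ᵀ * J₂ * Ξ * (J₁ - D₁) * V₂ᵀ := by rw [hM3]
      _ = V₁ᵀ * J₂ * Ξ * J₁ * V₂ᵀ - V₁ᵀ * J₂ * Ξ * D₁ * V₂ᵀ := by
          rw [Matrix.mul_sub, Matrix.sub_mul]
  -- entry versions
  have entry : ∀ (M : Matrix (Fin 1) (Fin 1) ℂ), (starRingEnd ℂ) (M 0 0) = Mᴴ 0 0 := by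
    intro M
    rw [starRingEnd_apply, Matrix.conjTranspose_apply]
  have f1 := congrArg (fun M : Matrix (Fin 1) (Fin 1) ℂ => M 0 0) F1
  have f2 := congrArg (fun M : Matrix (Fin 1) (Fin 1) ℂ => M 0 0) F2
  have f3 := congrArg (fun M : Matrix (Fin 1) (Fin 1) ℂ => M 0 0) F3
  have f4 := congrArg (fun M : Matrix (Fin 1) (Fin 1) ℂ => M 0 0) F4
  have f5 := congrArg (fun M : Matrix (Fin 1) (Fin 1) ℂ => M 0 0) F5
  have f6 := congrArg (fun M : Matrix (Fin 1) (Fin 1) ℂ => M 0 0) F6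
  have ea1 := congrArg (fun M : Matrix (Fin 1) (Fin 1) ℂ => M 0 0) EA1
  have ea2 := congrArg (fun M : Matrix (Fin 1) (Fin 1) ℂ => M 0 0) EA2
  have eb1 := congrArg (fun M : Matrix (Fin 1) (Fin 1) ℂ => M 0 0) EB1
  have eb2 := congrArg (fun M : Matrix (Fin 1) (Fin 1) ℂ => M 0 0) EB2
  have ec1 := congrArg (fun M : Matrix (Fin 1) (Fin 1) ℂ => M 0 0) EC1
  have ec2 := congrArg (fun M : Matrix (Fin 1) (Fin 1) ℂ => M 0 0) EC2
  have ed1 := congrArg (fun M : Matrix (Fin 1) (Fin 1) ℂ => M 0 0) ED1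
  have ed2 := congrArg (fun M : Matrix (Fin 1) (Fin 1) ℂ => M 0 0) ED2
  simp only [Matrix.sub_apply, Matrix.add_apply] at f1 f2 f3 f4 f5 f6 ea1 ea2 eb1 eb2 ec1 ec2 ed1 ed2
  -- conjugation of the scalar entries
  have hbTc : (starRingEnd ℂ) ((U₂ * J₁ * V₂ᵀ) 0 0) = (U₂ * J₁ * V₂ᵀ) 0 0 := by
    rw [entry]
    congr 1
    simp only [Matrix.conjTranspose_mul, cU₂, cV₂, hJ1h, Matrix.mul_assoc]
  have haTc : (starRingEnd ℂ) ((V₁ᵀ * J₂ * U₁) 0 0) = (V₁ᵀ * J₂ * U₁) 0 0 := by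
    rw [entry]
    congr 1
    simp only [Matrix.conjTranspose_mul, cU₁, cV₁, hJ2h, Matrix.mul_assoc]
  have hdTc : (starRingEnd ℂ) ((V₁ᵀ * J₂ * Ξ * J₁ * V₂ᵀ) 0 0)
      = (U₂ * J₁ * Ξᴴ * J₂ * U₁) 0 0 := by
    rw [entry]
    congr 1
    simp only [Matrix.conjTranspose_mul, cV₁, cV₂, hJ1h, hJ2h, Matrix.mul_assoc]
  have hs1c : (starRingEnd ℂ) ((Z₂ * D₁ * Ξᴴ * J₂ * Z₁) 0 0)
      = (Z₁ᴴ * J₂ * Ξ * D₁ * Z₂ᴴ) 0 0 := by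
    rw [entry]
    congr 1
    simp only [Matrix.conjTranspose_mul, Matrix.conjTranspose_conjTranspose, hJ2h, hD1h,
      Matrix.mul_assoc]
  have hs2c : (starRingEnd ℂ) ((Z₂ * J₁ * Ξᴴ * D₂ * Z₁) 0 0)
      = (Z₁ᴴ * D₂ * Ξ * J₁ * Z₂ᴴ) 0 0 := by
    rw [entry]
    congr 1
    simp only [Matrix.conjTranspose_mul, Matrix.conjTranspose_conjTranspose, hJ1h, hD2h,
      Matrix.mul_assoc]
  have hcw : (starRingEnd ℂ) w = -(Complex.I * (c : ℂ)) - (1/2) * (U₂ * J₁ * V₂ᵀ) 0 0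
      + (1/2) * (V₁ᵀ * J₂ * U₁) 0 0 - (U₂ * J₁ * Ξᴴ * J₂ * U₁) 0 0 := by
    rw [hw]
    simp only [map_sub, map_add, _root_.map_mul, map_div₀, _root_.map_one, map_ofNat, Complex.conj_I,
      Complex.conj_ofReal, hbTc, haTc, hdTc]
    ring
  have hconjs : (starRingEnd ℂ) ((1/2) * (Z₂ * D₁ * Ξᴴ * J₂ * Z₁) 0 0
        + (1/2) * (Z₂ * J₁ * Ξᴴ * D₂ * Z₁) 0 0)
      = (1/2) * (Z₁ᴴ * J₂ * Ξ * D₁ * Z₂ᴴ) 0 0 + (1/2) * (Z₁ᴴ * D₂ * Ξ * J₁ * Z₂ᴴ) 0 0 := by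
    simp only [map_add, _root_.map_mul, map_div₀, _root_.map_one, map_ofNat, hs1c, hs2c]
  have h_w := Complex.add_conj w
  have h_s := Complex.add_conj ((1/2) * (Z₂ * D₁ * Ξᴴ * J₂ * Z₁) 0 0
      + (1/2) * (Z₂ * J₁ * Ξᴴ * D₂ * Z₁) 0 0)
  linear_combination (norm := (push_cast; ring1)) (-(1/2 : ℂ)) * h_w + (1/2 : ℂ) * hw + (1/2 : ℂ) * hcw
    + (1/2 : ℂ) * h_s - (1/2 : ℂ) * hconjs
    - (1/2 : ℂ) * f1 + (1/2 : ℂ) * f2 - (1/4 : ℂ) * f3 - (1/4 : ℂ) * f4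
    - (1/4 : ℂ) * f5 - (1/4 : ℂ) * f6
    - (1/4 : ℂ) * ea1 - (1/4 : ℂ) * ea2 + (1/4 : ℂ) * eb1 + (1/4 : ℂ) * eb2
    + (1/4 : ℂ) * ec1 + (1/4 : ℂ) * ec2 + (1/4 : ℂ) * ed1 + (1/4 : ℂ) * ed2
end

section
/- Let n ≥ 1, let J be an n×n signature matrix, and let Ξ be an n×n complex symmetric matrix (Ξᵀ = Ξ) such that J − ΞJΞ̄ is invertible; set D = (J − ΞJΞ̄)⁻¹. Let X, Y ∈ ℝ^n be column vectors and c ∈ ℝ, and put U = X + iY. Define the column vector Z = U − ΞJŪ and the scalar w = ic − ŪᵀJU + ŪᵀJΞJŪ. Then Re(w) = −Z̄ᵀDZ − Re(ZᵀJΞ̄DZ). -/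
open Matrix in
theorem sp_aux
    (n : ℕ)
    (J : Matrix (Fin n) (Fin n) ℂ)
    (hJh : Jᴴ = J) (hJt : Jᵀ = J) (hJ2 : J * J = 1)
    (Ξ : Matrix (Fin n) (Fin n) ℂ) (hΞ : Ξᵀ = Ξ)
    (hinv : IsUnit (J - Ξ * J * Ξ.map (starRingEnd ℂ)))
    (D : Matrix (Fin n) (Fin n) ℂ) (hD : D = (J - Ξ * J * Ξ.map (starRingEnd ℂ))⁻¹)
    (c : ℝ)
    (U : Matrix (Fin n) (Fin 1) ℂ)
    (Z : Matrix (Fin n) (Fin 1) ℂ) (hZ : Z = U - Ξ * J * U.map (starRingEnd ℂ))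
    (w : ℂ)
    (hw : w = Complex.I * (c : ℂ) - (Uᴴ * J * U) 0 0
        + (Uᴴ * J * Ξ * J * U.map (starRingEnd ℂ)) 0 0) :
    (w.re : ℂ) = -(Zᴴ * D * Z) 0 0
      - Complex.ofReal ((Zᵀ * J * Ξ.map (starRingEnd ℂ) * D * Z) 0 0).re := by
  have hΞe : ∀ i j, Ξ j i = Ξ i j := fun i j => congrFun (congrFun hΞ i) j
  have hdet : IsUnit (J - Ξ * J * Ξ.map (starRingEnd ℂ)).det :=
    (Matrix.isUnit_iff_isUnit_det _).mp hinv
  have hAD : (J - Ξ * J * Ξ.map (starRingEnd ℂ)) * D = 1 := by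
    rw [hD]; exact Matrix.mul_nonsing_inv _ hdet
  have hUc : (U.map (starRingEnd ℂ))ᴴ = Uᵀ := by
    ext i j
    rw [Matrix.conjTranspose_apply, Matrix.map_apply, starRingEnd_apply, star_star,
      Matrix.transpose_apply]
  have hUt : (U.map (starRingEnd ℂ))ᵀ = Uᴴ := by
    ext i j
    rw [Matrix.transpose_apply, Matrix.map_apply, Matrix.conjTranspose_apply,
      starRingEnd_apply]
  have hΞh : Ξᴴ = Ξ.map (starRingEnd ℂ) := by
    ext i j
    rw [Matrix.conjTranspose_apply, Matrix.map_apply, hΞe i j, starRingEnd_apply]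
  have hΞch : (Ξ.map (starRingEnd ℂ))ᴴ = Ξ := by
    ext i j
    rw [Matrix.conjTranspose_apply, Matrix.map_apply, starRingEnd_apply, star_star]
    exact hΞe i j
  have hZh : Zᴴ = Uᴴ - Uᵀ * J * Ξ.map (starRingEnd ℂ) := by
    rw [hZ, Matrix.conjTranspose_sub, Matrix.conjTranspose_mul, Matrix.conjTranspose_mul,
      hUc, hJh, hΞh, ← Matrix.mul_assoc]
  have hZt : Zᵀ = Uᵀ - Uᴴ * J * Ξ := by
    rw [hZ, Matrix.transpose_sub, Matrix.transpose_mul, Matrix.transpose_mul,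
      hUt, hJt, hΞ, ← Matrix.mul_assoc]
  have hUJJ : Uᴴ * J * J = Uᴴ := by rw [Matrix.mul_assoc, hJ2, Matrix.mul_one]
  have h1 : Zᴴ + Zᵀ * J * Ξ.map (starRingEnd ℂ)
      = Uᴴ - Uᴴ * J * Ξ * J * Ξ.map (starRingEnd ℂ) := by
    rw [hZh, hZt]
    simp only [Matrix.sub_mul]
    abel
  have h2 : Uᴴ * J * (J - Ξ * J * Ξ.map (starRingEnd ℂ))
      = Uᴴ - Uᴴ * J * Ξ * J * Ξ.map (starRingEnd ℂ) := by
    rw [Matrix.mul_sub, hUJJ]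
    simp only [Matrix.mul_assoc]
  have e1 : (Zᴴ + Zᵀ * J * Ξ.map (starRingEnd ℂ)) * D * Z
      = Zᴴ * D * Z + Zᵀ * J * Ξ.map (starRingEnd ℂ) * D * Z := by
    rw [Matrix.add_mul, Matrix.add_mul]
  have key : Zᴴ * D * Z + Zᵀ * J * Ξ.map (starRingEnd ℂ) * D * Z = Uᴴ * J * Z := by
    rw [← e1, h1, ← h2, Matrix.mul_assoc (Uᴴ * J) (J - Ξ * J * Ξ.map (starRingEnd ℂ)) D,
      hAD, Matrix.mul_one]
  have hentry : (Zᴴ * D * Z) 0 0 + (Zᵀ * J * Ξ.map (starRingEnd ℂ) * D * Z) 0 0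
      = (Uᴴ * J * Z) 0 0 := by
    rw [← Matrix.add_apply, key]
  have hUJZ : (Uᴴ * J * Z) 0 0
      = (Uᴴ * J * U) 0 0 - (Uᴴ * J * Ξ * J * U.map (starRingEnd ℂ)) 0 0 := by
    have h3 : Uᴴ * J * Z = Uᴴ * J * U - Uᴴ * J * Ξ * J * U.map (starRingEnd ℂ) := by
      rw [hZ, Matrix.mul_sub]
      simp only [Matrix.mul_assoc]
    rw [h3, Matrix.sub_apply]
  have hw2 : (Zᴴ * D * Z) 0 0 + (Zᵀ * J * Ξ.map (starRingEnd ℂ) * D * Z) 0 0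
      = Complex.I * (c : ℂ) - w := by
    rw [hentry, hUJZ, hw]; ring
  have hAh : (J - Ξ * J * Ξ.map (starRingEnd ℂ))ᴴ = J - Ξ * J * Ξ.map (starRingEnd ℂ) := by
    rw [Matrix.conjTranspose_sub, Matrix.conjTranspose_mul, Matrix.conjTranspose_mul,
      hJh, hΞh, hΞch]
    simp only [Matrix.mul_assoc]
  have hDh : Dᴴ = D := by
    rw [hD, Matrix.conjTranspose_nonsing_inv, hAh]
  have hsreal : (starRingEnd ℂ) ((Zᴴ * D * Z) 0 0) = (Zᴴ * D * Z) 0 0 := by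
    have hh : (Zᴴ * D * Z)ᴴ = Zᴴ * D * Z := by
      rw [Matrix.conjTranspose_mul, Matrix.conjTranspose_mul,
        Matrix.conjTranspose_conjTranspose, hDh, ← Matrix.mul_assoc]
    calc (starRingEnd ℂ) ((Zᴴ * D * Z) 0 0) = (Zᴴ * D * Z)ᴴ 0 0 := by
          rw [Matrix.conjTranspose_apply, starRingEnd_apply]
      _ = (Zᴴ * D * Z) 0 0 := by rw [hh]
  have hsre : (((Zᴴ * D * Z) 0 0).re : ℂ) = (Zᴴ * D * Z) 0 0 :=
    Complex.conj_eq_iff_re.mp hsreal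
  have hweq : w = Complex.I * (c : ℂ) - (Zᴴ * D * Z) 0 0
      - (Zᵀ * J * Ξ.map (starRingEnd ℂ) * D * Z) 0 0 := by
    linear_combination hw2
  have hwre : w.re = -(((Zᴴ * D * Z) 0 0).re)
      - ((Zᵀ * J * Ξ.map (starRingEnd ℂ) * D * Z) 0 0).re := by
    rw [hweq]
    simp [Complex.sub_re, Complex.mul_re]
  rw [hwre]
  push_cast
  rw [hsre]

open Matrix in
theorem sp_model_defining_equation
    (n : ℕ) (hn : 1 ≤ n)
    (J : Matrix (Fin n) (Fin n) ℂ) (hJ : IsSignatureMatrix J)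
    (Ξ : Matrix (Fin n) (Fin n) ℂ) (hΞ : Ξᵀ = Ξ)
    (hinv : IsUnit (J - Ξ * J * Ξ.map (starRingEnd ℂ)))
    (D : Matrix (Fin n) (Fin n) ℂ) (hD : D = (J - Ξ * J * Ξ.map (starRingEnd ℂ))⁻¹)
    (X Y : Matrix (Fin n) (Fin 1) ℝ) (c : ℝ)
    (U : Matrix (Fin n) (Fin 1) ℂ)
    (hU : U = X.map Complex.ofReal + Complex.I • Y.map Complex.ofReal)
    (Z : Matrix (Fin n) (Fin 1) ℂ) (hZ : Z = U - Ξ * J * U.map (starRingEnd ℂ))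
    (w : ℂ)
    (hw : w = Complex.I * (c : ℂ) - (Uᴴ * J * U) 0 0
        + (Uᴴ * J * Ξ * J * U.map (starRingEnd ℂ)) 0 0) :
    (w.re : ℂ) = -(Zᴴ * D * Z) 0 0
      - Complex.ofReal ((Zᵀ * J * Ξ.map (starRingEnd ℂ) * D * Z) 0 0).re := by
  obtain ⟨d, hd, rfl⟩ := hJ
  have hds : star d = d := by
    funext i; rcases hd i with h | h <;> simp [h]
  have hJh : (Matrix.diagonal d)ᴴ = Matrix.diagonal d := by
    rw [Matrix.diagonal_conjTranspose, hds]
  have hJt : (Matrix.diagonal d)ᵀ = Matrix.diagonal d := Matrix.diagonal_transpose d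
  have hJ2 : Matrix.diagonal d * Matrix.diagonal d = 1 := by
    rw [Matrix.diagonal_mul_diagonal]
    have hdd : (fun i => d i * d i) = fun _ => (1 : ℂ) := by
      funext i; rcases hd i with h | h <;> simp [h]
    rw [hdd]
    exact Matrix.diagonal_one
  exact sp_aux n (Matrix.diagonal d) hJh hJt hJ2 Ξ hΞ hinv D hD c U Z hZ w hw
end

section
/- Let x₁, y₁, x₂, y₂, c ∈ ℝ and ξ ∈ ℂ with ξξ̄ ≠ 1. Put u₁ = x₁ + iy₁ and u₂ = x₂ + iy₂, and define z₁ = u₁ − ξū₂, z₂ = u₂ − ξū₁, and w = ic − (1/2)u₂ū₂ − (1/2)u₁ū₁ + ξū₁ū₂. Then Re(w) = −(z₁z̄₁ + z₂z̄₂ + 2·Re(z₁z₂ξ̄))/(2 − 2ξξ̄). -/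
/-!
With `P = ξ ū₁ ū₂`, the real part of `w` is `-(|u₁|² + |u₂|² - 2 Re P) / 2`, while expanding the
Hermitian form in `z₁ = u₁ - ξ ū₂`, `z₂ = u₂ - ξ ū₁` gives
`|z₁|² + |z₂|² + 2 Re(z₁ z₂ ξ̄) = (1 - |ξ|²) (|u₁|² + |u₂|² - 2 Re P)`.
Dividing by `2 - 2|ξ|² ≠ 0` yields the defining equation.
-/

open ComplexConjugate Complex

lemma re_su22_model_w (c : ℝ) (ξ u₁ u₂ : ℂ) :
    ((I * c - (1/2) * u₂ * conj u₂ - (1/2) * u₁ * conj u₁ + ξ * conj u₁ * conj u₂).re : ℂ) =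
      -(u₁ * conj u₁ + u₂ * conj u₂ - 2 * ((ξ * conj u₁ * conj u₂).re : ℂ)) / 2 := by
  simp only [re_eq_add_conj, map_add, map_sub, map_mul, map_div₀, map_one, map_ofNat,
    conj_conj, conj_ofReal, conj_I]
  ring

lemma su22_model_hermitian_form_eq (ξ u₁ u₂ : ℂ) :
    (u₁ - ξ * conj u₂) * conj (u₁ - ξ * conj u₂) + (u₂ - ξ * conj u₁) * conj (u₂ - ξ * conj u₁)
        + 2 * (((u₁ - ξ * conj u₂) * (u₂ - ξ * conj u₁) * conj ξ).re : ℂ) =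
      (1 - ξ * conj ξ) * (u₁ * conj u₁ + u₂ * conj u₂ - 2 * ((ξ * conj u₁ * conj u₂).re : ℂ)) := by
  simp only [re_eq_add_conj, map_sub, map_mul, conj_conj]
  ring

open ComplexConjugate in
theorem su22_model_defining_equation_general
    (c : ℝ) (ξ : ℂ) (hξ : ξ * conj ξ ≠ 1)
    (u₁ u₂ z₁ z₂ w : ℂ)
    (hz₁ : z₁ = u₁ - ξ * conj u₂)
    (hz₂ : z₂ = u₂ - ξ * conj u₁)
    (hw : w = Complex.I * (c : ℂ) - (1/2) * u₂ * conj u₂ - (1/2) * u₁ * conj u₁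
        + ξ * conj u₁ * conj u₂) :
    (w.re : ℂ) = -(z₁ * conj z₁ + z₂ * conj z₂
        + 2 * Complex.ofReal (z₁ * z₂ * conj ξ).re) / (2 - 2 * ξ * conj ξ) := by
  subst hz₁ hz₂ hw
  have hξ' : 1 - ξ * conj ξ ≠ 0 := sub_ne_zero.mpr hξ.symm
  rw [re_su22_model_w, su22_model_hermitian_form_eq]
  field_simp

open ComplexConjugate in
theorem su22_model_defining_equation
    (x₁ y₁ x₂ y₂ c : ℝ) (ξ : ℂ) (hξ : ξ * conj ξ ≠ 1)
    (u₁ u₂ z₁ z₂ w : ℂ)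
    (hu₁ : u₁ = (x₁ : ℂ) + Complex.I * (y₁ : ℂ))
    (hu₂ : u₂ = (x₂ : ℂ) + Complex.I * (y₂ : ℂ))
    (hz₁ : z₁ = u₁ - ξ * conj u₂)
    (hz₂ : z₂ = u₂ - ξ * conj u₁)
    (hw : w = Complex.I * (c : ℂ) - (1/2) * u₂ * conj u₂ - (1/2) * u₁ * conj u₁
        + ξ * conj u₁ * conj u₂) :
    (w.re : ℂ) = -(z₁ * conj z₁ + z₂ * conj z₂
        + 2 * Complex.ofReal (z₁ * z₂ * conj ξ).re) / (2 - 2 * ξ * conj ξ) :=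
  su22_model_defining_equation_general c ξ hξ u₁ u₂ z₁ z₂ w hz₁ hz₂ hw
end

section
/- Let x₁, y₁, x₂, y₂, c ∈ ℝ and ξ ∈ ℂ. Put u₁ = x₁ + iy₁ and u₂ = x₂ + iy₂, and define z₁ = u₁ − ξū₂, z₂ = u₂ + ξū₁, and w = ic − (1/2)u₂ū₂ + (1/2)u₁ū₁ − ξū₁ū₂. Then Re(w) = (z̄₁z₁ − z₂z̄₂ + 2·Re(z₁z₂ξ̄))/(2 + 2ξξ̄). -/
/-!
Substituting `z₁ = u₁ - ξ ū₂`, `z₂ = u₂ + ξ ū₁`, the numerator factors as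
`(1 + |ξ|²) (|u₁|² - |u₂|² - 2 Re (ξ ū₁ ū₂))`, while `Re w = (|u₁|² - |u₂|²)/2 - Re (ξ ū₁ ū₂)`
since `i c` is purely imaginary; the factor `1 + |ξ|²` cancels against the denominator.
-/

open ComplexConjugate Complex

theorem normSq_sub_normSq_add_two_re_mul_conj (ξ u₁ u₂ : ℂ) :
    normSq (u₁ - ξ * conj u₂) - normSq (u₂ + ξ * conj u₁)
      + 2 * ((u₁ - ξ * conj u₂) * (u₂ + ξ * conj u₁) * conj ξ).re
      = (1 + normSq ξ) * (normSq u₁ - normSq u₂ - 2 * (ξ * conj u₁ * conj u₂).re) := by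
  simp only [normSq_apply, mul_re, mul_im, sub_re, sub_im, add_re, add_im, conj_re, conj_im]
  ring

theorem re_I_mul_ofReal_sub_half_normSq_add_half_normSq (c : ℝ) (ξ u₁ u₂ : ℂ) :
    (I * c - (1/2) * u₂ * conj u₂ + (1/2) * u₁ * conj u₁ - ξ * conj u₁ * conj u₂).re
      = (normSq u₁ - normSq u₂) / 2 - (ξ * conj u₁ * conj u₂).re := by
  simp only [mul_conj, mul_assoc, sub_re, add_re, mul_re, I_re, I_im, ofReal_re, ofReal_im]
  norm_num
  ring

open ComplexConjugate in
theorem su31_model_defining_equation_general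
    (c : ℝ) (ξ : ℂ)
    (u₁ u₂ z₁ z₂ w : ℂ)
    (hz₁ : z₁ = u₁ - ξ * conj u₂)
    (hz₂ : z₂ = u₂ + ξ * conj u₁)
    (hw : w = Complex.I * (c : ℂ) - (1/2) * u₂ * conj u₂ + (1/2) * u₁ * conj u₁
        - ξ * conj u₁ * conj u₂) :
    (w.re : ℂ) = (conj z₁ * z₁ - z₂ * conj z₂
        + 2 * Complex.ofReal (z₁ * z₂ * conj ξ).re) / (2 + 2 * ξ * conj ξ) := by
  have hden : (2 + 2 * normSq ξ : ℝ) ≠ 0 := by linarith [normSq_nonneg ξ]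
  rw [← normSq_eq_conj_mul_self, mul_conj, mul_assoc 2 ξ, mul_conj]
  norm_cast
  rw [eq_div_iff hden, hw, re_I_mul_ofReal_sub_half_normSq_add_half_normSq, hz₁, hz₂,
    normSq_sub_normSq_add_two_re_mul_conj]
  ring

open ComplexConjugate in
theorem su31_model_defining_equation
    (x₁ y₁ x₂ y₂ c : ℝ) (ξ : ℂ)
    (u₁ u₂ z₁ z₂ w : ℂ)
    (hu₁ : u₁ = (x₁ : ℂ) + Complex.I * (y₁ : ℂ))
    (hu₂ : u₂ = (x₂ : ℂ) + Complex.I * (y₂ : ℂ))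
    (hz₁ : z₁ = u₁ - ξ * conj u₂)
    (hz₂ : z₂ = u₂ + ξ * conj u₁)
    (hw : w = Complex.I * (c : ℂ) - (1/2) * u₂ * conj u₂ + (1/2) * u₁ * conj u₁
        - ξ * conj u₁ * conj u₂) :
    (w.re : ℂ) = (conj z₁ * z₁ - z₂ * conj z₂
        + 2 * Complex.ofReal (z₁ * z₂ * conj ξ).re) / (2 + 2 * ξ * conj ξ) :=
  su31_model_defining_equation_general c ξ u₁ u₂ z₁ z₂ w hz₁ hz₂ hw
end
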